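/- Let A, B, C be finite sets of integers and let m be a positive integer with m ≥ |x| for every x ∈ A ∪ B ∪ C. Working in the rationals, define A' = { a/m - 5 : a ∈ A }, B' = { b/(2m) : b ∈ B }, and C' = { c/m + 5 : c ∈ C }. Then there exist a ∈ A, b ∈ B, c ∈ C with a + b + c = 0 if and only if there exists b' ∈ B' such that the image of C' under the map x ↦ -2b' - x (reflection of the real line across the point -b') has nonempty intersection with A'. -/

import Mathlib

/-- With `m > 0` bounding every `|x|` for `x ∈ A ∪ B ∪ C`, and the
rescaled sets `A' = {a/m - 5}`, `B' = {b/(2m)}`, `C' = {c/m + 5}`, a zero-sum triple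
`a + b + c = 0` exists iff for some `b' ∈ B'` the reflection of `C'` across the point
`-b'` (i.e. its image under `x ↦ -2b' - x`) meets `A'`. -/
theorem threeSum_rescale_iff_reflection_meets (A B C : Finset ℤ) (m : ℤ) (hm0 : 0 < m)
    (hm : ∀ x ∈ A ∪ B ∪ C, |x| ≤ m) :
    (∃ a ∈ A, ∃ b ∈ B, ∃ c ∈ C, a + b + c = 0) ↔
      (∃ b' ∈ B.image (fun b : ℤ => (b : ℚ) / (2 * (m : ℚ))),
        (((C.image (fun c : ℤ => (c : ℚ) / (m : ℚ) + 5)).image (fun x => -2 * b' - x)) ∩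
          (A.image (fun a : ℤ => (a : ℚ) / (m : ℚ) - 5))).Nonempty) := by
  have hmQ : ((m : ℚ)) ≠ 0 := by exact_mod_cast hm0.ne'
  constructor
  · rintro ⟨a, ha, b, hb, c, hc, habc⟩
    refine ⟨(b : ℚ) / (2 * m), Finset.mem_image.2 ⟨b, hb, rfl⟩,
      (a : ℚ) / m - 5, Finset.mem_inter.2 ⟨?_, Finset.mem_image.2 ⟨a, ha, rfl⟩⟩⟩
    refine Finset.mem_image.2 ⟨(c : ℚ) / m + 5, Finset.mem_image.2 ⟨c, hc, rfl⟩, ?_⟩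
    have : (a : ℚ) = -(b : ℚ) - c := by
      have : (a : ℚ) + b + c = 0 := by exact_mod_cast congrArg (Int.cast : ℤ → ℚ) habc
      linarith
    field_simp [this]
    linarith
  · rintro ⟨b', hb', x, hx⟩
    obtain ⟨b, hb, rfl⟩ := Finset.mem_image.1 hb'
    have hx1 := Finset.mem_inter.1 hx
    obtain ⟨y, hy, hyx⟩ := Finset.mem_image.1 hx1.1
    obtain ⟨c, hc, rfl⟩ := Finset.mem_image.1 hy
    obtain ⟨a, ha, hax⟩ := Finset.mem_image.1 hx1.2
    refine ⟨a, ha, b, hb, c, hc, ?_⟩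
    have key := hax.trans hyx.symm
    have h2 : ((a : ℚ) + b + c) / m = 0 := by
      have e : ((a : ℚ) + b + c) / m =
          ((a : ℚ) / m - 5) - (-2 * ((b : ℚ) / (2 * m)) - ((c : ℚ) / m + 5)) := by
        field_simp
        ring
      rw [e, key, sub_self]
    have h : (a : ℚ) + b + c = 0 := (div_eq_zero_iff.mp h2).resolve_right hmQ
    exact_mod_cast h
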